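/- arXiv:1005.2335 — 2 statements merged into one kernel-verified Lean document; each statement's English description precedes it below -/
import Mathlib

section
/- For positive reals β_1,…,β_N, γ_0,…,γ_N and Z = γ_0 + Σ_{i=1}^N β_i γ_i, the N×N matrix Q with entries Q_{ij} = (γ_i/(β_i Z)) δ_{ij} − γ_i γ_j / Z² is positive definite. -/
/-!
`Q` is a positive diagonal matrix `D = diag(γᵢ / (βᵢ Z))` minus the rank-one matrix `v vᵀ` with
`vᵢ = γᵢ / Z`. Such a matrix is positive definite as soon as `vᵀ D⁻¹ v < 1`, by the weighted
Cauchy–Schwarz inequality `(v ⬝ᵥ x)² ≤ (vᵀ D⁻¹ v) (xᵀ D x)`. Here `vᵀ D⁻¹ v = Σ βᵢ γᵢ / Z`, which is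
`< 1` precisely because `γ₀ > 0`.
-/

open Matrix Finset

namespace Matrix

variable {n : Type*} [Fintype n] [DecidableEq n]

theorem dotProduct_diagonal_sub_vecMulVec_self_mulVec (d v x : n → ℝ) :
    x ⬝ᵥ ((diagonal d - vecMulVec v v) *ᵥ x) = ∑ i, d i * x i ^ 2 - (v ⬝ᵥ x) ^ 2 := by
  rw [sub_mulVec, dotProduct_sub, vecMulVec_mulVec, op_smul_eq_smul, dotProduct_smul,
    dotProduct_comm x v, smul_eq_mul, sq (v ⬝ᵥ x)]
  congr 1
  simp only [dotProduct, mulVec_diagonal]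
  exact sum_congr rfl fun i _ => by ring

theorem posDef_diagonal_sub_vecMulVec_self {d v : n → ℝ} (hd : ∀ i, 0 < d i)
    (hv : ∑ i, v i ^ 2 / d i < 1) : (diagonal d - vecMulVec v v).PosDef := by
  refine PosDef.of_dotProduct_mulVec_pos ?_ fun x hx => ?_
  · refine (isHermitian_diagonal d).sub ?_
    ext i j
    simp [vecMulVec, mul_comm]
  rw [star_trivial, dotProduct_diagonal_sub_vecMulVec_self_mulVec]
  obtain ⟨k, hk⟩ := Function.ne_iff.mp hx
  have hquad : 0 < ∑ i, d i * x i ^ 2 :=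
    sum_pos' (fun i _ => mul_nonneg (hd i).le (sq_nonneg _))
      ⟨k, mem_univ k, mul_pos (hd k) (sq_pos_of_ne_zero hk)⟩
  have cauchySchwarz : (v ⬝ᵥ x) ^ 2 ≤ (∑ i, v i ^ 2 / d i) * ∑ i, d i * x i ^ 2 :=
    sum_sq_le_sum_mul_sum_of_sq_le_mul _
      (fun i _ => div_nonneg (sq_nonneg _) (hd i).le)
      (fun i _ => mul_nonneg (hd i).le (sq_nonneg _))
      (fun i _ => by field_simp [(hd i).ne']; rfl)
  exact sub_pos.mpr (cauchySchwarz.trans_lt (mul_lt_of_lt_one_left hquad hv))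

end Matrix

theorem Q_matrix_posDef_general (N : ℕ) (β γ : Fin N → ℝ) (γ₀ : ℝ)
    (hβ : ∀ i, 0 < β i) (hγ : ∀ i, 0 < γ i) (hγ₀ : 0 < γ₀)
    (Z : ℝ) (hZ : Z = γ₀ + ∑ i, β i * γ i)
    (Q : Matrix (Fin N) (Fin N) ℝ)
    (hQ : ∀ i j, Q i j = (if i = j then γ i / (β i * Z) else 0) - γ i * γ j / Z ^ 2) :
    Q.PosDef := by
  have hZpos : 0 < Z :=
    hZ ▸ add_pos_of_pos_of_nonneg hγ₀ (sum_nonneg fun i _ => (mul_pos (hβ i) (hγ i)).le)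
  have hQ_eq :
      Q = diagonal (fun i => γ i / (β i * Z)) - vecMulVec (fun i => γ i / Z) (fun i => γ i / Z) := by
    ext i j
    rw [hQ, Matrix.sub_apply, diagonal_apply, vecMulVec_apply]
    ring
  rw [hQ_eq]
  refine posDef_diagonal_sub_vecMulVec_self (fun i => div_pos (hγ i) (mul_pos (hβ i) hZpos)) ?_
  have hterm : ∀ i, (γ i / Z) ^ 2 / (γ i / (β i * Z)) = β i * γ i / Z := fun i => by
    field_simp [(hγ i).ne', (hβ i).ne', hZpos.ne']
  rw [sum_congr rfl fun i _ => hterm i, ← sum_div, div_lt_one hZpos]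
  linarith

theorem Q_matrix_posDef (N : ℕ) (hN : 1 ≤ N) (β γ : Fin N → ℝ) (γ₀ : ℝ)
    (hβ : ∀ i, 0 < β i) (hγ : ∀ i, 0 < γ i) (hγ₀ : 0 < γ₀)
    (Z : ℝ) (hZ : Z = γ₀ + ∑ i, β i * γ i)
    (Q : Matrix (Fin N) (Fin N) ℝ)
    (hQ : ∀ i j, Q i j = (if i = j then γ i / (β i * Z) else 0) - γ i * γ j / Z ^ 2) :
    Q.PosDef :=
  Q_matrix_posDef_general N β γ γ₀ hβ hγ hγ₀ Z hZ Q hQ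
end

section
/- For positive reals β_1,…,β_N, γ_0,…,γ_N, Z = γ_0 + Σ_{i=1}^N β_i γ_i, and 1 ≤ k ≤ N, the determinant of the k×k leading principal submatrix of the matrix Q with entries Q_{ij} = (γ_i/(β_i Z)) δ_{ij} − γ_i γ_j / Z² equals (γ_0 + Σ_{i=k+1}^N β_i γ_i) · Z^{−(k+1)} · ∏_{i=1}^k (γ_i / β_i). -/
/-!
The leading block factors as `diag (γᵢ / (βᵢ Z)) * (1 - (β / Z) γᵀ)`, so by the matrix determinant
lemma its determinant is `∏ᵢ γᵢ / (βᵢ Z) * (1 - ∑_{i<k} βᵢ γᵢ / Z)`, and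
`Z - ∑_{i<k} βᵢ γᵢ = γ₀ + ∑_{i≥k} βᵢ γᵢ`.
-/

open Matrix Finset

theorem Matrix.det_one_sub_vecMulVec {m α : Type*} [Fintype m] [DecidableEq m] [CommRing α]
    (u v : m → α) : (1 - vecMulVec u v).det = 1 - v ⬝ᵥ u := by
  rw [sub_eq_add_neg, ← neg_vecMulVec, vecMulVec_eq Unit,
    det_one_add_replicateCol_mul_replicateRow, dotProduct_neg, ← sub_eq_add_neg]

theorem Matrix.det_diagonal_sub_smul_vecMulVec {ι K : Type*} [Fintype ι] [DecidableEq ι] [Field K]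
    {b g : ι → K} {z : K} (hb : ∀ i, b i ≠ 0) (hz : z ≠ 0) :
    (diagonal (fun i => g i / (b i * z)) - (z ^ 2)⁻¹ • vecMulVec g g).det
      = (z - ∑ i, b i * g i) / z ^ (Fintype.card ι + 1) * ∏ i, g i / b i := by
  have hfactor : diagonal (fun i => g i / (b i * z)) - (z ^ 2)⁻¹ • vecMulVec g g
      = diagonal (fun i => g i / (b i * z)) * (1 - vecMulVec (fun i => b i / z) g) := by
    ext i j
    have hbi := hb i
    rw [Matrix.mul_sub, Matrix.mul_one]
    simp only [sub_apply, smul_apply, diagonal_mul, vecMulVec_apply, smul_eq_mul, diagonal_apply]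
    split_ifs <;> field_simp
  have hdot : g ⬝ᵥ (fun i => b i / z) = (∑ i, b i * g i) / z := by
    simp only [dotProduct, sum_div]
    exact sum_congr rfl fun i _ => by ring
  rw [hfactor, det_mul, det_diagonal, det_one_sub_vecMulVec, hdot, prod_div_distrib,
    prod_mul_distrib, prod_const, card_univ, prod_div_distrib]
  field_simp
  ring

theorem Fin.sum_univ_eq_sum_castLE_add_sum_filter_le {M : Type*} [AddCommMonoid M] {k n : ℕ}
    (h : k ≤ n) (f : Fin n → M) :
    ∑ i, f i = ∑ i : Fin k, f (castLE h i) + ∑ i ∈ univ.filter (fun i : Fin n => k ≤ i.val), f i := by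
  have hrange : univ.map (castLEEmb h) = univ.filter (fun i : Fin n => ¬ k ≤ i.val) := by
    ext i
    simp only [mem_map, mem_univ, true_and, mem_filter, not_le, coe_castLEEmb]
    exact ⟨fun ⟨j, hj⟩ => hj ▸ j.isLt, fun hi => ⟨⟨i, hi⟩, rfl⟩⟩
  rw [← sum_filter_not_add_sum_filter univ (fun i : Fin n => k ≤ i.val), ← hrange, sum_map]
  rfl

theorem Q_leading_principal_minor_general (N : ℕ) (β γ : Fin N → ℝ) (γ₀ : ℝ)
    (hβ : ∀ i, 0 < β i) (hγ : ∀ i, 0 < γ i) (hγ₀ : 0 < γ₀)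
    (Z : ℝ) (hZ : Z = γ₀ + ∑ i, β i * γ i)
    (Q : Matrix (Fin N) (Fin N) ℝ)
    (hQ : ∀ i j, Q i j = (if i = j then γ i / (β i * Z) else 0) - γ i * γ j / Z ^ 2)
    (k : ℕ) (hkN : k ≤ N) :
    (Q.submatrix (Fin.castLE hkN) (Fin.castLE hkN)).det
      = (γ₀ + ∑ i ∈ Finset.univ.filter (fun i : Fin N => k ≤ i.val), β i * γ i)
        / Z ^ (k + 1) * ∏ i : Fin k, γ (Fin.castLE hkN i) / β (Fin.castLE hkN i) := by
  have hZpos : 0 < Z := hZ ▸ add_pos_of_pos_of_nonneg hγ₀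
    (sum_nonneg fun i _ => (mul_pos (hβ i) (hγ i)).le)
  have hsub : Q.submatrix (Fin.castLE hkN) (Fin.castLE hkN)
      = diagonal (fun i => (γ ∘ Fin.castLE hkN) i / ((β ∘ Fin.castLE hkN) i * Z))
        - (Z ^ 2)⁻¹ • vecMulVec (γ ∘ Fin.castLE hkN) (γ ∘ Fin.castLE hkN) := by
    ext i j
    simp only [submatrix_apply, hQ, Fin.castLE_inj, Matrix.sub_apply, diagonal_apply,
      Matrix.smul_apply, vecMulVec_apply, Function.comp_apply, smul_eq_mul]
    ring
  have htail : γ₀ + ∑ i ∈ univ.filter (fun i : Fin N => k ≤ i.val), β i * γ i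
      = Z - ∑ i : Fin k, β (Fin.castLE hkN i) * γ (Fin.castLE hkN i) := by
    rw [hZ, Fin.sum_univ_eq_sum_castLE_add_sum_filter_le hkN]
    ring
  rw [hsub, det_diagonal_sub_smul_vecMulVec (b := β ∘ Fin.castLE hkN) (fun i => (hβ _).ne')
    hZpos.ne', Fintype.card_fin, htail]
  rfl

theorem Q_leading_principal_minor (N : ℕ) (hN : 1 ≤ N) (β γ : Fin N → ℝ) (γ₀ : ℝ)
    (hβ : ∀ i, 0 < β i) (hγ : ∀ i, 0 < γ i) (hγ₀ : 0 < γ₀)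
    (Z : ℝ) (hZ : Z = γ₀ + ∑ i, β i * γ i)
    (Q : Matrix (Fin N) (Fin N) ℝ)
    (hQ : ∀ i j, Q i j = (if i = j then γ i / (β i * Z) else 0) - γ i * γ j / Z ^ 2)
    (k : ℕ) (hk1 : 1 ≤ k) (hkN : k ≤ N) :
    (Q.submatrix (Fin.castLE hkN) (Fin.castLE hkN)).det
      = (γ₀ + ∑ i ∈ Finset.univ.filter (fun i : Fin N => k ≤ i.val), β i * γ i)
        / Z ^ (k + 1) * ∏ i : Fin k, γ (Fin.castLE hkN i) / β (Fin.castLE hkN i) :=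
  Q_leading_principal_minor_general N β γ γ₀ hβ hγ hγ₀ Z hZ Q hQ k hkN
end
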